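/- arXiv:1302.0597 — 3 statements merged into one kernel-verified Lean document; each statement's English description precedes it below -/
import Mathlib

section
/- Suppose μ(X) < ∞ and the operator T = M_w E M_u : f ↦ w·E(u f) is bounded on L²(Σ) with operator norm ‖T‖. Then (E(|w|²))^{1/2}·(E(|u|²))^{1/2} ≤ ‖T‖ almost everywhere; in particular (E(|w|²))^{1/2}·(E(|u|²))^{1/2} ∈ L^∞(𝒜) and ‖(E(|w|²))^{1/2}·(E(|u|²))^{1/2}‖_∞ ≤ ‖T‖. -/
open MeasureTheory
open scoped ENNReal

/-!
Test `T` against `f = 1_A · ū` for an `m`-measurable set `A` on which `E(|u|²)` is bounded. Then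
`E(u f) = 1_A E(|u|²)`, so `‖f‖² = ∫_A E(|u|²)` and, by the pull-out property,
`‖T f‖² = ∫_A E(|u|²)² E(|w|²)`. Since `‖T f‖² ≤ ‖T‖² ‖f‖²` for every such `A` and both integrands
are `m`-measurable, `E(|u|²)² E(|w|²) ≤ ‖T‖² E(|u|²)` a.e.; dividing by `E(|u|²)` where it is
positive gives the bound.
-/

theorem MeasureTheory.L2.norm_sq_eq_integral_norm_sq {X 𝕜 E : Type*} [RCLike 𝕜]
    [NormedAddCommGroup E] [InnerProductSpace 𝕜 E] {m0 : MeasurableSpace X} {μ : Measure X}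
    (F : Lp E 2 μ) : ‖F‖ ^ 2 = ∫ x, ‖F x‖ ^ 2 ∂μ := by
  rw [norm_sq_eq_re_inner (𝕜 := 𝕜), L2.inner_def, ← integral_re (L2.integrable_inner F F)]
  simp only [inner_self_eq_norm_sq]

theorem MeasureTheory.condExp_ofReal {X 𝕜 : Type*} [RCLike 𝕜] {m m0 : MeasurableSpace X}
    {μ : Measure X} {f : X → ℝ} (hf : Integrable f μ) :
    μ[fun x => (f x : 𝕜)|m] =ᵐ[μ] fun x => (μ[f|m] x : 𝕜) :=
  ((RCLike.ofRealCLM (K := 𝕜)).comp_condExp_comm hf).symm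

theorem MeasureTheory.integral_mul_condExp_of_bound {X : Type*} {m m0 : MeasurableSpace X}
    (hm : m ≤ m0) {μ : Measure X} [SigmaFinite (μ.trim hm)] {φ g : X → ℝ}
    (hφ : StronglyMeasurable[m] φ) {c : ℝ} (hφc : ∀ x, ‖φ x‖ ≤ c) (hg : Integrable g μ) :
    ∫ x, φ x * μ[g|m] x ∂μ = ∫ x, φ x * g x ∂μ := by
  have hφg : Integrable (φ * g) μ :=
    hg.bdd_mul (hφ.mono hm).aestronglyMeasurable (.of_forall hφc)
  calc ∫ x, φ x * μ[g|m] x ∂μ = ∫ x, μ[φ * g|m] x ∂μ :=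
        integral_congr_ae (condExp_mul_of_stronglyMeasurable_left hφ hφg hg).symm
    _ = ∫ x, φ x * g x ∂μ := integral_condExp hm

theorem MeasureTheory.ae_le_of_forall_setIntegral_le_of_stronglyMeasurable {X : Type*}
    {m m0 : MeasurableSpace X} (hm : m ≤ m0) {μ : Measure X} {f g : X → ℝ}
    (hf : StronglyMeasurable[m] f) (hg : StronglyMeasurable[m] g)
    (hfi : Integrable f μ) (hgi : Integrable g μ)
    (hfg : ∀ s, MeasurableSet[m] s → ∫ x in s, f x ∂μ ≤ ∫ x in s, g x ∂μ) : f ≤ᵐ[μ] g := by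
  refine ae_le_of_ae_le_trim (ae_le_of_forall_setIntegral_le (hfi.trim hm hf) (hgi.trim hm hg)
    fun s hs _ => ?_)
  rw [← setIntegral_trim hm hf hs, ← setIntegral_trim hm hg hs]
  exact hfg s hs

theorem Real.sqrt_mul_sqrt_le_of_mul_sq_le {a b t : ℝ} (ha : 0 ≤ a) (hb : 0 ≤ b) (ht : 0 ≤ t)
    (h : a ^ 2 * b ≤ t ^ 2 * a) : √b * √a ≤ t := by
  rw [← Real.sqrt_mul hb, Real.sqrt_le_left ht]
  rcases ha.eq_or_lt with rfl | ha
  · simpa using sq_nonneg t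
  · nlinarith

theorem norm_indicator_sq_le_sq {X : Type*} {A : Set X} {g : X → ℝ} {c : ℝ}
    (hg : ∀ x ∈ A, |g x| ≤ c) (x : X) : ‖A.indicator (fun y => g y ^ 2) x‖ ≤ c ^ 2 := by
  by_cases hx : x ∈ A
  · rw [Set.indicator_of_mem hx, Real.norm_eq_abs, abs_pow]
    exact pow_le_pow_left₀ (abs_nonneg _) (hg x hx) 2
  · rw [Set.indicator_of_notMem hx, norm_zero]
    positivity

section WeightedConditionalExpectation

variable {X : Type*} {m m0 : MeasurableSpace X} {μ : Measure X} {u w : X → ℂ} {A : Set X}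

theorem condExp_mul_indicator_star (hm : m ≤ m0) [SigmaFinite (μ.trim hm)]
    (hu : Integrable (fun y => ‖u y‖ ^ 2) μ) (hA : MeasurableSet[m] A) :
    μ[fun y => u y * A.indicator (star u) y|m] =ᵐ[μ]
      A.indicator fun y => ((μ[fun y => ‖u y‖ ^ 2|m] y : ℝ) : ℂ) := by
  have hmul : (fun y => u y * A.indicator (star u) y) =
      A.indicator fun y => ((‖u y‖ ^ 2 : ℝ) : ℂ) := by
    ext y
    rw [← Set.indicator_mul_right]
    simp only [Pi.star_apply, RCLike.star_def, Complex.mul_conj', Complex.ofReal_pow]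
  rw [hmul]
  refine (condExp_indicator (hu.ofReal (𝕜 := ℂ)) hA).trans ?_
  filter_upwards [condExp_ofReal (𝕜 := ℂ) (m := m) hu] with y hy
  by_cases hyA : y ∈ A
  · simpa [hyA] using hy
  · simp [hyA]

theorem norm_sq_toLp_indicator_star (hm : m ≤ m0) [SigmaFinite (μ.trim hm)]
    (hu : MemLp u 2 μ) (hA : MeasurableSet[m] A) :
    ‖(hu.star.indicator (hm A hA)).toLp‖ ^ 2 = ∫ x in A, μ[fun y => ‖u y‖ ^ 2|m] x ∂μ := by
  have hF := (hu.star.indicator (hm A hA)).coeFn_toLp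
  rw [L2.norm_sq_eq_integral_norm_sq (𝕜 := ℂ),
    setIntegral_condExp hm ((memLp_two_iff_integrable_sq_norm hu.1).1 hu) hA,
    ← integral_indicator (hm A hA)]
  refine integral_congr_ae ?_
  filter_upwards [hF] with x hx
  rw [hx]
  by_cases hxA : x ∈ A <;> simp [hxA]

variable {T : Lp ℂ 2 μ →L[ℂ] Lp ℂ 2 μ}

theorem setIntegral_sq_condExp_mul_condExp_le (hm : m ≤ m0) [SigmaFinite (μ.trim hm)]
    (hu : MemLp u 2 μ) (hw : Integrable (fun y => ‖w y‖ ^ 2) μ)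
    (hT : ∀ f : Lp ℂ 2 μ, ⇑(T f) =ᵐ[μ] fun x => w x * (μ[fun y => u y * f y|m]) x)
    (hA : MeasurableSet[m] A) {c : ℝ} (hc : ∀ x ∈ A, |μ[fun y => ‖u y‖ ^ 2|m] x| ≤ c) :
    ∫ x in A, (μ[fun y => ‖u y‖ ^ 2|m] x) ^ 2 * μ[fun y => ‖w y‖ ^ 2|m] x ∂μ
      ≤ ‖T‖ ^ 2 * ∫ x in A, μ[fun y => ‖u y‖ ^ 2|m] x ∂μ := by
  set F : Lp ℂ 2 μ := (hu.star.indicator (hm A hA)).toLp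
  have hF : ⇑F =ᵐ[μ] A.indicator (star u) := (hu.star.indicator (hm A hA)).coeFn_toLp
  have hTF : ⇑(T F) =ᵐ[μ]
      fun x => w x * A.indicator (fun y => (μ[fun y => ‖u y‖ ^ 2|m] y : ℂ)) x := by
    have huF : (fun y => u y * F y) =ᵐ[μ] fun y => u y * A.indicator (star u) y := by
      filter_upwards [hF] with y hy
      rw [hy]
    filter_upwards [hT _, (condExp_congr_ae huF).trans
      (condExp_mul_indicator_star hm ((memLp_two_iff_integrable_sq_norm hu.1).1 hu) hA)]
      with x hTx hEx
    rw [hTx, hEx]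
  have hnormTF : ‖T F‖ ^ 2 =
      ∫ x in A, (μ[fun y => ‖u y‖ ^ 2|m] x) ^ 2 * μ[fun y => ‖w y‖ ^ 2|m] x ∂μ := by
    have hsq : StronglyMeasurable[m] (A.indicator fun y => (μ[fun y => ‖u y‖ ^ 2|m] y) ^ 2) :=
      (stronglyMeasurable_condExp.pow 2).indicator hA
    calc ‖T F‖ ^ 2
        = ∫ x, A.indicator (fun y => (μ[fun y => ‖u y‖ ^ 2|m] y) ^ 2) x * ‖w x‖ ^ 2 ∂μ := by
          rw [L2.norm_sq_eq_integral_norm_sq (𝕜 := ℂ)]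
          refine integral_congr_ae ?_
          filter_upwards [hTF] with x hx
          rw [hx]
          by_cases hxA : x ∈ A <;> simp [hxA, mul_pow, mul_comm (‖w x‖ ^ 2)]
      _ = ∫ x, A.indicator (fun y => (μ[fun y => ‖u y‖ ^ 2|m] y) ^ 2) x *
            μ[fun y => ‖w y‖ ^ 2|m] x ∂μ :=
          (integral_mul_condExp_of_bound hm hsq (norm_indicator_sq_le_sq hc) hw).symm
      _ = _ := by
          simp_rw [← Set.indicator_mul_left]
          exact integral_indicator (hm A hA)
  calc _ = ‖T F‖ ^ 2 := hnormTF.symm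
    _ ≤ (‖T‖ * ‖F‖) ^ 2 := pow_le_pow_left₀ (norm_nonneg _) (T.le_opNorm F) 2
    _ = _ := by rw [mul_pow, norm_sq_toLp_indicator_star hm hu hA]

theorem ae_sq_condExp_mul_condExp_le (hm : m ≤ m0) [SigmaFinite (μ.trim hm)]
    (hu : MemLp u 2 μ) (hw : Integrable (fun y => ‖w y‖ ^ 2) μ)
    (hT : ∀ f : Lp ℂ 2 μ, ⇑(T f) =ᵐ[μ] fun x => w x * (μ[fun y => u y * f y|m]) x) :
    ∀ᵐ x ∂μ, (μ[fun y => ‖u y‖ ^ 2|m] x) ^ 2 * μ[fun y => ‖w y‖ ^ 2|m] x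
      ≤ ‖T‖ ^ 2 * μ[fun y => ‖u y‖ ^ 2|m] x := by
  set gu := μ[fun y => ‖u y‖ ^ 2|m]
  set gw := μ[fun y => ‖w y‖ ^ 2|m]
  have hgu : StronglyMeasurable[m] gu := stronglyMeasurable_condExp
  have hgw : StronglyMeasurable[m] gw := stronglyMeasurable_condExp
  -- On `{|gu| ≤ n}` the left-hand side is integrable, so the set inequality can be localized.
  have htrunc (n : ℕ) : ∀ᵐ x ∂μ, |gu x| ≤ n → gu x ^ 2 * gw x ≤ ‖T‖ ^ 2 * gu x := by
    set B := {x | |gu x| ≤ n}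
    have hB : MeasurableSet[m] B := hgu.norm.measurableSet_le stronglyMeasurable_const
    have hlhs : Integrable (B.indicator fun x => gu x ^ 2 * gw x) μ :=
      (integrable_condExp.bdd_mul (((hgu.pow 2).indicator hB).mono hm).aestronglyMeasurable
        (.of_forall (norm_indicator_sq_le_sq fun _ hx => hx))).congr
        (.of_forall fun x => (Set.indicator_mul_left B _ _).symm)
    have hle : B.indicator (fun x => gu x ^ 2 * gw x) ≤ᵐ[μ] B.indicator fun x => ‖T‖ ^ 2 * gu x :=
      ae_le_of_forall_setIntegral_le_of_stronglyMeasurable hm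
        (((hgu.pow 2).mul hgw).indicator hB) ((hgu.const_mul _).indicator hB) hlhs
        ((integrable_condExp.const_mul _).indicator (hm B hB)) fun s hs => by
          rw [setIntegral_indicator (hm B hB), setIntegral_indicator (hm B hB),
            integral_const_mul]
          exact setIntegral_sq_condExp_mul_condExp_le hm hu hw hT (hs.inter hB) fun _ hx => hx.2
    filter_upwards [hle] with x hx hxB
    simpa [Set.indicator_of_mem (show x ∈ B from hxB)] using hx
  filter_upwards [ae_all_iff.2 htrunc] with x hx
  obtain ⟨n, hn⟩ := exists_nat_ge |gu x|
  exact hx n hn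

theorem ae_sqrt_condExp_mul_sqrt_condExp_le (hm : m ≤ m0) [SigmaFinite (μ.trim hm)]
    (hu : AEStronglyMeasurable u μ)
    (hT : ∀ f : Lp ℂ 2 μ, ⇑(T f) =ᵐ[μ] fun x => w x * (μ[fun y => u y * f y|m]) x) :
    ∀ᵐ x ∂μ, √(μ[fun y => ‖w y‖ ^ 2|m] x) * √(μ[fun y => ‖u y‖ ^ 2|m] x) ≤ ‖T‖ := by
  -- `μ[f|m] = 0` when `f` is not integrable, which makes those cases trivial.
  by_cases hu2 : Integrable (fun y => ‖u y‖ ^ 2) μ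
  swap; · simp [condExp_of_not_integrable hu2]
  by_cases hw2 : Integrable (fun y => ‖w y‖ ^ 2) μ
  swap; · simp [condExp_of_not_integrable hw2]
  filter_upwards [ae_sq_condExp_mul_condExp_le hm ((memLp_two_iff_integrable_sq_norm hu).2 hu2)
      hw2 hT, condExp_nonneg (m := m) (.of_forall fun y => sq_nonneg ‖u y‖),
      condExp_nonneg (m := m) (.of_forall fun y => sq_nonneg ‖w y‖)] with x hx hgu hgw
  exact Real.sqrt_mul_sqrt_le_of_mul_sq_le hgu hgw (norm_nonneg T) hx

end WeightedConditionalExpectation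

theorem stmt_2_general {X : Type*} {m m0 : MeasurableSpace X} (hm : m ≤ m0)
    (μ : Measure X) [SigmaFinite (μ.trim hm)]
    (u w : X → ℂ) (hu : Measurable u)
    (T : Lp ℂ 2 μ →L[ℂ] Lp ℂ 2 μ)
    (hT : ∀ f : Lp ℂ 2 μ, ⇑(T f) =ᵐ[μ] fun x => w x * (μ[fun y => u y * f y|m]) x) :
    (∀ᵐ x ∂μ, Real.sqrt ((μ[fun y => ‖w y‖ ^ 2|m]) x) *
      Real.sqrt ((μ[fun y => ‖u y‖ ^ 2|m]) x) ≤ ‖T‖) ∧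
    MemLp (fun x => Real.sqrt ((μ[fun y => ‖w y‖ ^ 2|m]) x) *
      Real.sqrt ((μ[fun y => ‖u y‖ ^ 2|m]) x)) ∞ μ ∧
    eLpNorm (fun x => Real.sqrt ((μ[fun y => ‖w y‖ ^ 2|m]) x) *
      Real.sqrt ((μ[fun y => ‖u y‖ ^ 2|m]) x)) ∞ μ ≤ ENNReal.ofReal ‖T‖ := by
  have hbound := ae_sqrt_condExp_mul_sqrt_condExp_le hm hu.aestronglyMeasurable hT
  have hnorm := hbound.mono fun x hx => (Real.norm_of_nonneg (by positivity)).trans_le hx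
  have hmeas : AEStronglyMeasurable (fun x => Real.sqrt ((μ[fun y => ‖w y‖ ^ 2|m]) x) *
      Real.sqrt ((μ[fun y => ‖u y‖ ^ 2|m]) x)) μ :=
    ((stronglyMeasurable_condExp.mono hm).measurable.sqrt.mul
      (stronglyMeasurable_condExp.mono hm).measurable.sqrt).aestronglyMeasurable
  refine ⟨hbound, memLp_top_of_bound hmeas _ hnorm, ?_⟩
  rw [eLpNorm_exponent_top]
  exact eLpNormEssSup_le_of_ae_bound hnorm

/-- Suppose `μ(X) < ∞` and the operator `T = M_w E M_u :
f ↦ w·E(u f)` is bounded on `L²(Σ)` with operator norm `‖T‖`.  Then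
`(E(|w|²))^{1/2}·(E(|u|²))^{1/2} ≤ ‖T‖` almost everywhere; in particular
`(E(|w|²))^{1/2}·(E(|u|²))^{1/2} ∈ L^∞(𝒜)` and
`‖(E(|w|²))^{1/2}·(E(|u|²))^{1/2}‖_∞ ≤ ‖T‖`. -/
theorem stmt_2 {X : Type*} {m m0 : MeasurableSpace X} (hm : m ≤ m0)
    (μ : Measure X) [IsFiniteMeasure μ] [SigmaFinite (μ.trim hm)]
    (u w : X → ℂ) (hu : Measurable u) (hw : Measurable w)
    (T : Lp ℂ 2 μ →L[ℂ] Lp ℂ 2 μ)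
    (hT : ∀ f : Lp ℂ 2 μ, ⇑(T f) =ᵐ[μ] fun x => w x * (μ[fun y => u y * f y|m]) x) :
    (∀ᵐ x ∂μ, Real.sqrt ((μ[fun y => ‖w y‖ ^ 2|m]) x) *
      Real.sqrt ((μ[fun y => ‖u y‖ ^ 2|m]) x) ≤ ‖T‖) ∧
    MemLp (fun x => Real.sqrt ((μ[fun y => ‖w y‖ ^ 2|m]) x) *
      Real.sqrt ((μ[fun y => ‖u y‖ ^ 2|m]) x)) ∞ μ ∧
    eLpNorm (fun x => Real.sqrt ((μ[fun y => ‖w y‖ ^ 2|m]) x) *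
      Real.sqrt ((μ[fun y => ‖u y‖ ^ 2|m]) x)) ∞ μ ≤ ENNReal.ofReal ‖T‖ :=
  stmt_2_general hm μ u w hu T hT
end

section
/- Let g ∈ L^∞(𝒜) and let T = M_w E M_u : f ↦ w·E(u f) be bounded on L²(Σ). If M_g T = 0 (i.e. g·w·E(u f) = 0 for all f ∈ L²(Σ)), then g = 0 almost everywhere on the support σ(E(|w|²)·E(|u|²)) = {x : E(|w|²)(x)·E(|u|²)(x) ≠ 0}. -/
/-!
Testing `M_g T = 0` on `f = conj u ∈ L²` gives `g · E(|u|²) · w = 0` a.e. The factor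
`φ = |g · E(|u|²)|²` is `𝒜`-measurable and kills `|w|²`, so by the pull-out property it kills
`E(|w|²)` as well: `|g|² · E(|u|²)² · E(|w|²) = 0` a.e.
-/

open MeasureTheory
open scoped ENNReal ComplexConjugate

section PullOut

variable {Ω : Type*} {m mΩ : MeasurableSpace Ω} {μ : Measure Ω}

theorem mul_condExp_ae_eq_zero_of_mul_ae_eq_zero {φ f : Ω → ℝ} (hφ : StronglyMeasurable[m] φ)
    (h : φ * f =ᵐ[μ] 0) : φ * μ[f|m] =ᵐ[μ] 0 := by
  by_cases hf : Integrable f μ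
  · calc φ * μ[f|m] =ᵐ[μ] μ[φ * f|m] :=
          (condExp_mul_of_stronglyMeasurable_left hφ ((integrable_zero _ _ _).congr h.symm) hf).symm
      _ =ᵐ[μ] μ[0|m] := condExp_congr_ae h
      _ = 0 := condExp_zero
  · simp [condExp_of_not_integrable hf]

theorem condExp_mul_conj_ae_eq {u : Ω → ℂ} (hu : Integrable (fun x => ‖u x‖ ^ 2) μ) :
    μ[fun x => u x * conj (u x)|m] =ᵐ[μ] fun x => ((μ[fun x => ‖u x‖ ^ 2|m]) x : ℂ) := by
  have h : (fun x => u x * conj (u x)) = Complex.ofRealCLM ∘ fun x => ‖u x‖ ^ 2 := by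
    ext x
    simp [Complex.mul_conj, Complex.normSq_eq_norm_sq]
  rw [h]
  exact (Complex.ofRealCLM.comp_condExp_comm hu).symm

end PullOut

theorem stmt_3_general {X : Type*} {m m0 : MeasurableSpace X}
    (μ : Measure X)
    (u w : X → ℂ) (hu : Measurable u)
    (g : X → ℂ) (hgm : Measurable[m] g)
    (T : Lp ℂ 2 μ →L[ℂ] Lp ℂ 2 μ)
    (hT : ∀ f : Lp ℂ 2 μ, ⇑(T f) =ᵐ[μ] fun x => w x * (μ[fun y => u y * f y|m]) x)
    (hMgT : ∀ f : Lp ℂ 2 μ, (fun x => g x * T f x) =ᵐ[μ] 0) :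
    ∀ᵐ x ∂μ, (μ[fun y => ‖w y‖ ^ 2|m]) x * (μ[fun y => ‖u y‖ ^ 2|m]) x ≠ 0 →
      g x = 0 := by
  set Eu := μ[fun y => ‖u y‖ ^ 2|m]
  by_cases hu2 : Integrable (fun y => ‖u y‖ ^ 2) μ
  swap
  · exact ae_of_all _ fun x hx => absurd (by simp [Eu, condExp_of_not_integrable hu2]) hx
  have hu_conj : MemLp (star u) 2 μ :=
    ((memLp_two_iff_integrable_sq_norm hu.aestronglyMeasurable).2 hu2).star
  set f := hu_conj.toLp (star u)
  have hEuf : μ[fun y => u y * f y|m] =ᵐ[μ] fun x => (Eu x : ℂ) :=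
    (condExp_congr_ae (hu_conj.coeFn_toLp.mul_left (f₃ := u))).trans (condExp_mul_conj_ae_eq hu2)
  have hgEuw : ∀ᵐ x ∂μ, g x * Eu x * w x = 0 := by
    filter_upwards [hMgT f, hT f, hEuf] with x hMgT hT hEuf
    rw [hT, hEuf] at hMgT
    simpa [mul_comm, mul_left_comm, mul_assoc] using hMgT
  have hEu : Measurable[m] Eu := stronglyMeasurable_condExp.measurable
  have hφ : StronglyMeasurable[m] fun x => ‖g x * Eu x‖ ^ 2 := by
    apply Measurable.stronglyMeasurable
    fun_prop
  have hφw := mul_condExp_ae_eq_zero_of_mul_ae_eq_zero (f := fun x => ‖w x‖ ^ 2) hφ <| by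
    filter_upwards [hgEuw] with x hx
    simpa using hx
  filter_upwards [hφw] with x hx hne
  simp_all

/-- Let `g ∈ L^∞(𝒜)` and let `T = M_w E M_u : f ↦ w·E(u f)` be
bounded on `L²(Σ)`.  If `M_g T = 0` (i.e. `g·w·E(u f) = 0` a.e. for all
`f ∈ L²(Σ)`), then `g = 0` almost everywhere on the support
`σ(E(|w|²)·E(|u|²)) = {x : E(|w|²)(x)·E(|u|²)(x) ≠ 0}`. -/
theorem stmt_3 {X : Type*} {m m0 : MeasurableSpace X} (hm : m ≤ m0)
    (μ : Measure X) [SigmaFinite μ] [SigmaFinite (μ.trim hm)]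
    (u w : X → ℂ) (hu : Measurable u) (hw : Measurable w)
    (g : X → ℂ) (hgm : Measurable[m] g) (hg : MemLp g ∞ μ)
    (T : Lp ℂ 2 μ →L[ℂ] Lp ℂ 2 μ)
    (hT : ∀ f : Lp ℂ 2 μ, ⇑(T f) =ᵐ[μ] fun x => w x * (μ[fun y => u y * f y|m]) x)
    (hMgT : ∀ f : Lp ℂ 2 μ, (fun x => g x * T f x) =ᵐ[μ] 0) :
    ∀ᵐ x ∂μ, (μ[fun y => ‖w y‖ ^ 2|m]) x * (μ[fun y => ‖u y‖ ^ 2|m]) x ≠ 0 →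
      g x = 0 :=
  stmt_3_general (m0 := m0) μ u w hu g hgm T hT hMgT
end

section
/- Let φ : X → X be a nonsingular measurable transformation such that φ^{-1}(Σ) is a sub-σ-algebra of Σ with σ-finite restricted measure, and for S ∈ Σ let ℰ(S)(f) = E^φ(χ_{φ^{-1}(S)}·f) on L²(Σ). If {S_n}_{n≥0} is a sequence of pairwise disjoint sets in Σ, then for every f ∈ L²(Σ), ℰ(⋃_{n≥0} S_n)(f) = Σ_{n=0}^∞ ℰ(S_n)(f), the series converging in L²(Σ); i.e. ℰ is countably additive in the strong operator topology. -/
open MeasureTheory Filter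
open scoped ENNReal Topology

/-!
On integrable functions the conditional expectation `μ[·|m]` agrees with the orthogonal
projection `condExpL2` onto the `m`-measurable part of `L²` (on non-integrable functions it is
the junk value `0`). Integrable elements are dense in `L²` and both sides are continuous, so
`ℰ(S)` is this projection composed with multiplication by the indicator of `φ⁻¹(S)`.
Countable additivity thus reduces to the `L²` convergence of `∑_{n<N} χ_{A_n} f` to
`χ_{⋃ A_n} f` for disjoint measurable `A_n`: the squared norm of the difference is the
`|f|² dμ`-measure of `⋃_{n≥N} A_n`, a decreasing sequence of sets with empty intersection
under a finite measure.
-/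

namespace MeasureTheory

section Indicator

variable {α E : Type*} {m : MeasurableSpace α} {μ : Measure α} {p : ℝ≥0∞} [NormedAddCommGroup E]

theorem tendsto_eLpNorm_indicator_of_antitone {f : α → E} (hf : MemLp f p μ) (hp : p ≠ ∞)
    {s : ℕ → Set α} (hs : ∀ n, MeasurableSet (s n)) (hanti : Antitone s)
    (hempty : ⋂ n, s n = ∅) :
    Tendsto (fun n => eLpNorm ((s n).indicator f) p μ) atTop (𝓝 0) := by
  rcases eq_or_ne p 0 with rfl | hp0
  · simp
  set ν := μ.withDensity fun x => ‖f x‖ₑ ^ p.toReal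
  have hν : ∀ n, eLpNorm ((s n).indicator f) p μ = ν (s n) ^ (1 / p.toReal) := fun n => by
    rw [eLpNorm_indicator_eq_eLpNorm_restrict (hs n),
      eLpNorm_eq_lintegral_rpow_enorm_toReal hp0 hp, withDensity_apply _ (hs n)]
  have hν_fin : ν (s 0) ≠ ∞ := by
    refine ne_top_of_le_ne_top ?_ (measure_mono (Set.subset_univ _))
    rw [withDensity_apply _ MeasurableSet.univ, Measure.restrict_univ]
    exact (lintegral_rpow_enorm_lt_top_of_eLpNorm_lt_top hp0 hp hf.eLpNorm_lt_top).ne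
  have hν_lim : Tendsto (fun n => ν (s n)) atTop (𝓝 0) := by
    simpa [hempty, Function.comp_def] using
      tendsto_measure_iInter_atTop (fun n => (hs n).nullMeasurableSet) hanti ⟨0, hν_fin⟩
  have hexp : 0 < 1 / p.toReal := by
    simpa using ENNReal.toReal_pos hp0 hp
  simp_rw [hν]
  have hroot := ((ENNReal.continuous_rpow_const (y := 1 / p.toReal)).tendsto 0).comp hν_lim
  rwa [ENNReal.zero_rpow_of_pos hexp] at hroot

namespace Lp

theorem dense_setOf_integrable [Fact (1 ≤ p)] (hp : p ≠ ∞) :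
    Dense {f : Lp E p μ | Integrable f μ} := by
  refine (Lp.simpleFunc.dense hp).mono fun f hf => ?_
  have hint : Integrable (Lp.simpleFunc.toSimpleFunc ⟨f, hf⟩) μ :=
    (SimpleFunc.memLp_iff_integrable (zero_lt_one.trans_le Fact.out).ne' hp).mp
      (Lp.simpleFunc.memLp ⟨f, hf⟩)
  exact hint.congr (Lp.simpleFunc.toSimpleFunc_eq_toFun ⟨f, hf⟩)

variable (𝕜 : Type*) [NormedField 𝕜] [NormedSpace 𝕜 E] {s : Set α}

noncomputable def indicatorₗ (hs : MeasurableSet s) : Lp E p μ →ₗ[𝕜] Lp E p μ where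
  toFun f := ((Lp.memLp f).indicator hs).toLp _
  map_add' f g := by
    rw [← MemLp.toLp_add]
    refine MemLp.toLp_congr _ _ ?_
    filter_upwards [Lp.coeFn_add f g] with x hfg
    by_cases hx : x ∈ s
    · simp only [Set.indicator_of_mem hx, hfg, Pi.add_apply]
    · simp only [Set.indicator_of_notMem hx, Pi.add_apply, add_zero]
  map_smul' c f := by
    rw [RingHom.id_apply, ← MemLp.toLp_const_smul]
    refine MemLp.toLp_congr _ _ ?_
    filter_upwards [Lp.coeFn_smul c f] with x hcf
    by_cases hx : x ∈ s
    · simp only [Set.indicator_of_mem hx, hcf, Pi.smul_apply]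
    · simp only [Set.indicator_of_notMem hx, Pi.smul_apply, smul_zero]

theorem coeFn_indicatorₗ (hs : MeasurableSet s) (f : Lp E p μ) :
    (indicatorₗ 𝕜 hs f : α → E) =ᵐ[μ] s.indicator f :=
  MemLp.coeFn_toLp ((Lp.memLp f).indicator hs : MemLp (s.indicator f) p μ)

variable [Fact (1 ≤ p)]

noncomputable def indicatorCLM (hs : MeasurableSet s) : Lp E p μ →L[𝕜] Lp E p μ :=
  (indicatorₗ 𝕜 hs).mkContinuous 1 fun f => by
    rw [one_mul]
    refine Lp.norm_le_norm_of_ae_le ?_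
    filter_upwards [coeFn_indicatorₗ 𝕜 hs f] with x hx
    rw [hx]
    exact norm_indicator_le_norm_self _ _

theorem coeFn_indicatorCLM (hs : MeasurableSet s) (f : Lp E p μ) :
    (indicatorCLM 𝕜 hs f : α → E) =ᵐ[μ] s.indicator f :=
  coeFn_indicatorₗ 𝕜 hs f

theorem sum_indicatorCLM {ι : Type*} (t : Finset ι) {A : ι → Set α}
    (hA : ∀ i, MeasurableSet (A i)) (hdisj : Pairwise (Function.onFun Disjoint A))
    (f : Lp E p μ) :
    ∑ i ∈ t, indicatorCLM 𝕜 (hA i) f =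
      indicatorCLM 𝕜 (t.measurableSet_biUnion fun i _ => hA i) f := by
  refine Lp.ext ?_
  have hterms : ∀ᵐ x ∂μ, ∀ i ∈ t,
      (indicatorCLM 𝕜 (hA i) f : α → E) x = (A i).indicator f x :=
    (eventually_all_finset _).mpr fun i _ => coeFn_indicatorCLM 𝕜 (hA i) f
  filter_upwards [coeFn_fun_finsetSum t fun i => indicatorCLM 𝕜 (hA i) f, hterms,
    coeFn_indicatorCLM 𝕜 (t.measurableSet_biUnion fun i _ => hA i) f] with x hsum hx hU
  rw [hsum, hU, Finset.indicator_biUnion t A (hdisj.set_pairwise _)]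
  exact Finset.sum_congr rfl hx

theorem tendsto_indicatorCLM_of_monotone (hp : p ≠ ∞) {B : ℕ → Set α}
    (hB : ∀ n, MeasurableSet (B n)) (hmono : Monotone B) (f : Lp E p μ) :
    Tendsto (fun n => indicatorCLM 𝕜 (hB n) f) atTop
      (𝓝 (indicatorCLM 𝕜 (MeasurableSet.iUnion hB) f)) := by
  rw [tendsto_Lp_iff_tendsto_eLpNorm']
  have hdiff : ∀ n, eLpNorm (⇑(indicatorCLM 𝕜 (hB n) f) -
      ⇑(indicatorCLM 𝕜 (MeasurableSet.iUnion hB) f)) p μ =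
      eLpNorm (((⋃ k, B k) \ B n).indicator f) p μ := by
    intro n
    rw [← eLpNorm_neg]
    refine eLpNorm_congr_ae ?_
    filter_upwards [coeFn_indicatorCLM 𝕜 (hB n) f,
      coeFn_indicatorCLM 𝕜 (MeasurableSet.iUnion hB) f] with x hn hU
    rw [Pi.neg_apply, Pi.sub_apply, hn, hU, neg_sub,
      Set.indicator_sdiff (Set.subset_iUnion B n)]
    rfl
  simp_rw [hdiff]
  refine tendsto_eLpNorm_indicator_of_antitone (Lp.memLp f) hp
    (fun n => (MeasurableSet.iUnion hB).diff (hB n))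
    (fun i j hij => Set.sdiff_subset_sdiff_right (hmono hij)) ?_
  rw [← Set.sdiff_iUnion, Set.sdiff_self]

theorem tendsto_sum_indicatorCLM_iUnion (hp : p ≠ ∞) {A : ℕ → Set α}
    (hA : ∀ n, MeasurableSet (A n)) (hdisj : Pairwise (Function.onFun Disjoint A))
    (f : Lp E p μ) :
    Tendsto (fun N => ∑ n ∈ Finset.range N, indicatorCLM 𝕜 (hA n) f) atTop
      (𝓝 (indicatorCLM 𝕜 (MeasurableSet.iUnion hA) f)) := by
  simp_rw [sum_indicatorCLM 𝕜 _ hA hdisj]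
  have hmono : Monotone fun N => ⋃ n ∈ Finset.range N, A n := fun M N hMN =>
    Set.biUnion_subset_biUnion_left fun n hn => Finset.range_mono hMN hn
  have hU : ⋃ N, ⋃ n ∈ Finset.range N, A n = ⋃ n, A n := by
    simpa only [Finset.mem_range] using Set.biUnion_lt_eq_iUnion
  convert tendsto_indicatorCLM_of_monotone 𝕜 hp
    (fun N => (Finset.range N).measurableSet_biUnion fun n _ => hA n) hmono f using 4
  exact hU.symm

end Lp

end Indicator

section CondExp

variable {α E 𝕜 : Type*} [RCLike 𝕜] {m m₀ : MeasurableSpace α} {μ : Measure α}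
  [NormedAddCommGroup E] [NormedSpace ℝ E] [CompleteSpace E] [InnerProductSpace 𝕜 E]

theorem eq_condExpL2_comp_of_ae_eq_condExp (hm : m ≤ m₀) [SigmaFinite (μ.trim hm)]
    (T U : Lp E 2 μ →L[𝕜] Lp E 2 μ)
    (hU : ∀ f : Lp E 2 μ, Integrable f μ → Integrable (U f) μ)
    (hT : ∀ f : Lp E 2 μ, Integrable f μ → (T f : α → E) =ᵐ[μ] μ[U f | m]) :
    T = (lpMeas E 𝕜 m 2 μ).subtypeL.comp ((condExpL2 E 𝕜 hm).comp U) := by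
  refine ContinuousLinearMap.coeFn_injective <|
    Continuous.ext_on (Lp.dense_setOf_integrable (p := 2) ENNReal.ofNat_ne_top) T.continuous
      (ContinuousLinearMap.continuous _) fun f hf => Lp.ext ?_
  have hL2 := (Lp.memLp (U f)).condExpL2_ae_eq_condExp' (𝕜 := 𝕜) hm (hU f hf)
  rw [Lp.toLp_coeFn] at hL2
  exact (hT f hf).trans hL2.symm

end CondExp

end MeasureTheory

theorem stmt_18_general {X : Type*} {m0 : MeasurableSpace X}
    (μ : Measure X)
    (φ : X → X) (hφ : Measurable φ)
    (hm : MeasurableSpace.comap φ m0 ≤ m0)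
    [SigmaFinite (μ.trim hm)]
    (ℰ : Set X → (Lp ℂ 2 μ →L[ℂ] Lp ℂ 2 μ))
    (hℰ : ∀ S : Set X, MeasurableSet S → ∀ f : Lp ℂ 2 μ,
      ⇑(ℰ S f) =ᵐ[μ]
        μ[fun y => (φ ⁻¹' S).indicator (fun _ => (1 : ℂ)) y * f y|
          MeasurableSpace.comap φ m0])
    (S : ℕ → Set X) (hS : ∀ n, MeasurableSet (S n))
    (hdisj : Pairwise (Function.onFun Disjoint S)) :
    ∀ f : Lp ℂ 2 μ,
      Tendsto (fun N => ∑ n ∈ Finset.range N, ℰ (S n) f) atTop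
        (𝓝 (ℰ (⋃ n, S n) f)) := by
  intro f
  let P : Lp ℂ 2 μ →L[ℂ] Lp ℂ 2 μ :=
    (lpMeas ℂ ℂ (MeasurableSpace.comap φ m0) 2 μ).subtypeL.comp (condExpL2 ℂ ℂ hm)
  have hℰP : ∀ T (hT : MeasurableSet T), ℰ T = P.comp (Lp.indicatorCLM ℂ (hφ hT)) := by
    intro T hT
    refine eq_condExpL2_comp_of_ae_eq_condExp hm _ _ (fun g hg => ?_) fun g _ => ?_
    · exact (hg.indicator (hφ hT)).congr (Lp.coeFn_indicatorCLM ℂ _ g).symm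
    · refine (hℰ T hT g).trans (condExp_congr_ae ?_)
      filter_upwards [Lp.coeFn_indicatorCLM ℂ (hφ hT) g] with x hx
      rw [hx]
      by_cases hxT : x ∈ φ ⁻¹' T <;> simp [hxT]
  have hpre : Pairwise (Function.onFun Disjoint fun n => φ ⁻¹' S n) :=
    fun i j hij => (hdisj hij).preimage φ
  have hsum := (P.continuous.tendsto _).comp <|
    Lp.tendsto_sum_indicatorCLM_iUnion ℂ ENNReal.ofNat_ne_top (fun n => hφ (hS n)) hpre f
  have hℰS : ∀ n, ℰ (S n) = P.comp (Lp.indicatorCLM ℂ (hφ (hS n))) := fun n => hℰP _ (hS n)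
  rw [hℰP _ (MeasurableSet.iUnion hS)]
  simp_rw [hℰS]
  convert hsum using 2
  · exact (map_sum P _ _).symm
  · rw [ContinuousLinearMap.comp_apply]
    congr!
    exact Set.preimage_iUnion

/-- Let `φ : X → X` be a nonsingular measurable transformation
such that `φ⁻¹(Σ)` is a sub-σ-algebra of `Σ` with σ-finite restricted measure,
and for `S ∈ Σ` let `ℰ(S)(f) = E^φ(χ_{φ⁻¹(S)}·f)` on `L²(Σ)`.  If `{S_n}` is a
sequence of pairwise disjoint sets in `Σ`, then for every `f ∈ L²(Σ)`,
`ℰ(⋃ₙ Sₙ)(f) = Σ_{n=0}^∞ ℰ(Sₙ)(f)`, the series converging in `L²(Σ)`;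
i.e. `ℰ` is countably additive in the strong operator topology. -/
theorem stmt_18 {X : Type*} {m0 : MeasurableSpace X}
    (μ : Measure X) [SigmaFinite μ]
    (φ : X → X) (hφ : Measurable φ) (hns : μ.map φ ≪ μ)
    (hm : MeasurableSpace.comap φ m0 ≤ m0)
    [SigmaFinite (μ.trim hm)]
    (ℰ : Set X → (Lp ℂ 2 μ →L[ℂ] Lp ℂ 2 μ))
    (hℰ : ∀ S : Set X, MeasurableSet S → ∀ f : Lp ℂ 2 μ,
      ⇑(ℰ S f) =ᵐ[μ]
        μ[fun y => (φ ⁻¹' S).indicator (fun _ => (1 : ℂ)) y * f y|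
          MeasurableSpace.comap φ m0])
    (S : ℕ → Set X) (hS : ∀ n, MeasurableSet (S n))
    (hdisj : Pairwise (Function.onFun Disjoint S)) :
    ∀ f : Lp ℂ 2 μ,
      Tendsto (fun N => ∑ n ∈ Finset.range N, ℰ (S n) f) atTop
        (𝓝 (ℰ (⋃ n, S n) f)) :=
  stmt_18_general μ φ hφ hm ℰ hℰ S hS hdisj
end
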